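/- For every n ≥ 3, the factor monoid M(w) of any (n−1)-limited rigid word w satisfies the identities (0): xy t₁ x t₂ y ≈ yx t₁ x t₂ y, x t₁ xy t₂ y ≈ x t₁ yx t₂ y, x t₁ y t₂ xy ≈ x t₁ y t₂ yx, and the identity (Aₙ): xⁿ t₁t₂⋯tₙ ≈ (t₁x)(t₂x)⋯(tₙx). -/

import Mathlib

abbrev Word := List ℕ

def subst (φ : ℕ → Word) (w : Word) : Word := w.flatMap φ

inductive Deduce (S : Set (Word × Word)) : Word → Word → Prop
  | refl (w : Word) : Deduce S w w
  | symm {u v : Word} : Deduce S u v → Deduce S v u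
  | trans {u v w : Word} : Deduce S u v → Deduce S v w → Deduce S u w
  | step (a b : Word) (φ : ℕ → Word) {s t : Word} (h : (s, t) ∈ S) :
      Deduce S (a ++ subst φ s ++ b) (a ++ subst φ t ++ b)

def FM (w : Word) : Type := Option {u : Word // u <:+: w}

def fmul {w : Word} : FM w → FM w → FM w
  | some u, some v =>
      if h : (u.1 ++ v.1) <:+: w then some ⟨u.1 ++ v.1, h⟩ else none
  | _, _ => none

def fone (w : Word) : FM w := some ⟨[], List.nil_infix⟩

theorem fmul_none_left {w : Word} (a : FM w) : fmul none a = none := rfl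

theorem fmul_none_right {w : Word} (a : FM w) : fmul a none = none := by
  rcases a with _ | u <;> rfl

theorem fmul_some {w : Word} (u v : {u : Word // u <:+: w}) :
    fmul (some u) (some v) =
      if h : (u.1 ++ v.1) <:+: w then some ⟨u.1 ++ v.1, h⟩ else none := rfl

theorem fmul_assoc {w : Word} (a b c : FM w) : fmul (fmul a b) c = fmul a (fmul b c) := by
  rcases a with _ | u
  · rfl
  rcases b with _ | v
  · rfl
  rcases c with _ | t
  · rw [fmul_none_right] <;> rfl
  rw [fmul_some, fmul_some]
  by_cases h : (u.1 ++ v.1 ++ t.1) <:+: w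
  · have h1 : (u.1 ++ v.1) <:+: w := List.IsInfix.trans ⟨[], t.1, by simp⟩ h
    have h2 : (v.1 ++ t.1) <:+: w := List.IsInfix.trans ⟨u.1, [], by simp⟩ h
    rw [dif_pos h1, fmul_some, dif_pos h2, fmul_some, dif_pos h,
      dif_pos (show (u.1 ++ (v.1 ++ t.1)) <:+: w by simpa [List.append_assoc] using h)]
    simp [List.append_assoc]
    rfl
  · by_cases h1 : (u.1 ++ v.1) <:+: w
    · rw [dif_pos h1, fmul_some, dif_neg h]
      by_cases h2 : (v.1 ++ t.1) <:+: w
      · rw [dif_pos h2, fmul_some,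
          dif_neg (fun hh => h (by simpa [List.append_assoc] using hh))]
      · rw [dif_neg h2] <;> rfl
    · rw [dif_neg h1]
      by_cases h2 : (v.1 ++ t.1) <:+: w
      · rw [dif_pos h2, fmul_some,
          dif_neg (fun hh => h1 (List.IsInfix.trans ⟨[], t.1, by simp⟩ hh))] <;> rfl
      · rw [dif_neg h2] <;> rfl

instance (w : Word) : Monoid (FM w) where
  mul := fmul
  one := fone w
  mul_assoc := fmul_assoc
  one_mul := by
    rintro (_ | u)
    · rfl
    · show fmul (fone w) (some u) = some u
      rw [fone, fmul_some, dif_pos (by simpa using u.2)]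
      simp
      rfl
  mul_one := by
    rintro (_ | u)
    · rfl
    · show fmul (some u) (fone w) = some u
      rw [fone, fmul_some, dif_pos (by simpa using u.2)]
      simp
      rfl

def SatId (M : Type) [Monoid M] (p : Word × Word) : Prop :=
  ∀ φ : ℕ → M, (p.1.map φ).prod = (p.2.map φ).prod

def VSat (E : Set (Word × Word)) (p : Word × Word) : Prop :=
  ∀ (M : Type) [Monoid M], (∀ q ∈ E, SatId M q) → SatId M p

def ids0 : Set (Word × Word) :=
  {([0,1,2,0,3,1],[1,0,2,0,3,1]), ([0,2,0,1,3,1],[0,2,1,0,3,1]), ([0,2,1,3,0,1],[0,2,1,3,1,0])}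

def idA (n : ℕ) : Word × Word :=
  (List.replicate n 0 ++ (List.range n).map (· + 1),
   ((List.range n).map (fun i => [i + 1, 0])).flatten)

def rigid (e₀ : ℕ) (es : List ℕ) : Word :=
  List.replicate e₀ 0 ++ ((es.zipIdx.map Prod.swap).map (fun p => (p.1 + 1) :: List.replicate p.2 0)).flatten

def Bword (n i : ℕ) : Word := List.replicate i 0 ++ 1 :: List.replicate (n - 1 - i) 0

def wmr (m r : ℕ) : Word := rigid (m - 1) (List.replicate r (m - 1))

/-!
A product in `M(w)` is either zero or the concatenation of its factors, so an identity `s ≈ t`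
holds in `M(w)` exactly when every substitution of words sending `s` or `t` into a factor of `w`
sends both to the same word. In a rigid word every letter other than `x` occurs at most once.
In each identity of (0) the two swapped variables occur twice on each side, so they are sent to
powers of `x` and commute. In (Aₙ) the variable `x` occurs `n` times on each side, while `w`
contains at most `n - 1` letters `x` and each `tᵢ` once, so `x` is sent to the empty word, after
which both sides read `t₁ ⋯ tₙ`.
-/

namespace FM

variable {w : Word}

def ofWord (w u : Word) : FM w := if h : u <:+: w then some ⟨u, h⟩ else none

/-- The zero is sent to `0 :: w`, which is too long to be a factor of `w`. -/
def toWord : FM w → Word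
  | none => 0 :: w
  | some u => u.1

theorem ofWord_of_infix {u : Word} (h : u <:+: w) : ofWord w u = some ⟨u, h⟩ := dif_pos h

theorem ofWord_of_not_infix {u : Word} (h : ¬u <:+: w) : ofWord w u = none := dif_neg h

theorem ofWord_toWord (a : FM w) : ofWord w a.toWord = a := by
  rcases a with _ | u
  · exact ofWord_of_not_infix fun h => by simpa [toWord] using h.length_le
  · exact ofWord_of_infix u.2

theorem ofWord_append (u v : Word) : ofWord w (u ++ v) = ofWord w u * ofWord w v := by
  by_cases hu : u <:+: w
  · by_cases hv : v <:+: w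
    · rw [ofWord_of_infix hu, ofWord_of_infix hv]
      rfl
    · rw [ofWord_of_not_infix hv, ofWord_of_not_infix fun h =>
        hv ((List.suffix_append u v).isInfix.trans h)]
      exact (fmul_none_right _).symm
  · rw [ofWord_of_not_infix hu, ofWord_of_not_infix fun h =>
      hu ((List.prefix_append u v).isInfix.trans h)]
    rfl

theorem prod_map_ofWord (ψ : ℕ → Word) (s : Word) :
    (s.map fun i => ofWord w (ψ i)).prod = ofWord w (subst ψ s) := by
  induction s with
  | nil => exact (ofWord_of_infix List.nil_infix).symm
  | cons a s ih => rw [List.map_cons, List.prod_cons, ih, ← ofWord_append]; rfl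

theorem satId_of_subst {p : Word × Word}
    (h : ∀ ψ : ℕ → Word, subst ψ p.1 <:+: w ∨ subst ψ p.2 <:+: w → subst ψ p.1 = subst ψ p.2) :
    SatId (FM w) p := by
  intro φ
  have hφ : φ = fun i => ofWord w (φ i).toWord := funext fun i => (ofWord_toWord _).symm
  rw [hφ, prod_map_ofWord, prod_map_ofWord]
  by_cases hfac : subst (fun i => (φ i).toWord) p.1 <:+: w ∨
      subst (fun i => (φ i).toWord) p.2 <:+: w
  · exact congrArg _ (h _ hfac)
  · rw [not_or] at hfac
    rw [ofWord_of_not_infix hfac.1, ofWord_of_not_infix hfac.2]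

end FM

theorem subst_append (ψ : ℕ → Word) (s t : Word) :
    subst ψ (s ++ t) = subst ψ s ++ subst ψ t :=
  List.flatMap_append

theorem count_mul_le_count_subst (ψ : ℕ → Word) (s : Word) (i x : ℕ) :
    s.count i * (ψ i).count x ≤ (subst ψ s).count x := by
  induction s with
  | nil => simp
  | cons a s ih =>
    rw [show subst ψ (a :: s) = ψ a ++ subst ψ s from rfl, List.count_append, List.count_cons]
    by_cases ha : a = i
    · subst ha; simp only [beq_self_eq_true, if_true, Nat.succ_mul]; omega
    · simp only [beq_iff_eq, ha, if_false, Nat.add_zero]; omega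

theorem count_le_of_subst_infix {ψ : ℕ → Word} {s w : Word} (hs : subst ψ s <:+: w) {i x : ℕ}
    (hx : x ∈ ψ i) : s.count i ≤ w.count x :=
  calc s.count i ≤ s.count i * (ψ i).count x :=
        Nat.le_mul_of_pos_right _ (List.count_pos_iff.mpr hx)
    _ ≤ (subst ψ s).count x := count_mul_le_count_subst ψ s i x
    _ ≤ w.count x := hs.count_le x

theorem subst_filter_ne_of_eq_nil {ψ : ℕ → Word} {i : ℕ} (hi : ψ i = []) (s : Word) :
    subst ψ (s.filter (· ≠ i)) = subst ψ s := by
  induction s with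
  | nil => rfl
  | cons a s ih =>
    by_cases ha : a = i
    · rw [List.filter_cons_of_neg (by simpa using ha), ih]
      simp [subst, ha, hi]
    · rw [List.filter_cons_of_pos (by simpa using ha)]
      exact congrArg (ψ a ++ ·) ih

theorem count_zero_rigid (e₀ : ℕ) (es : List ℕ) : (rigid e₀ es).count 0 = e₀ + es.sum := by
  simp [rigid, List.count_flatten, Function.comp_def]

theorem count_succ_flatten_blocks (l : List (ℕ × ℕ)) (c : ℕ) :
    ((l.map fun p => (p.1 + 1) :: List.replicate p.2 0).flatten).count (c + 1) =
      (l.map Prod.fst).count c := by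
  induction l with
  | nil => rfl
  | cons p l ih => simp [List.count_cons, ih, List.count_replicate]

theorem count_rigid_le_one (e₀ : ℕ) (es : List ℕ) {c : ℕ} (hc : c ≠ 0) :
    (rigid e₀ es).count c ≤ 1 := by
  obtain ⟨c, rfl⟩ := Nat.exists_eq_succ_of_ne_zero hc
  rw [rigid, List.count_append, count_succ_flatten_blocks, List.map_map,
    show Prod.fst ∘ Prod.swap = (Prod.snd : ℕ × ℕ → ℕ) from rfl, List.zipIdx_map_snd,
    List.count_eq_zero.mpr (by simp), Nat.zero_add]
  exact List.nodup_iff_count_le_one.mp List.nodup_range' c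

theorem eq_zero_of_mem_of_subst_infix_rigid {e₀ : ℕ} {es : List ℕ} {ψ : ℕ → Word} {s : Word}
    (hs : subst ψ s <:+: rigid e₀ es) {i : ℕ} (hi : 2 ≤ s.count i) {x : ℕ} (hx : x ∈ ψ i) :
    x = 0 := by
  by_contra h0
  have := count_le_of_subst_infix hs hx
  have := count_rigid_le_one e₀ es h0
  omega

theorem two_le_count_append_append {l m r : Word} {i : ℕ} (hlr : i ∈ l ++ r) (hm : i ∈ m) :
    2 ≤ (l ++ m ++ r).count i := by
  have hlr' := List.count_pos_iff.mpr hlr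
  have hm' := List.count_pos_iff.mpr hm
  simp only [List.count_append] at hlr' ⊢
  omega

theorem satId_swap_rigid (e₀ : ℕ) (es : List ℕ) {l r : Word} (h0 : 0 ∈ l ++ r)
    (h1 : 1 ∈ l ++ r) : SatId (FM (rigid e₀ es)) (l ++ [0, 1] ++ r, l ++ [1, 0] ++ r) := by
  refine FM.satId_of_subst fun ψ hψ => ?_
  have hpow : ∀ i ∈ l ++ r, i ∈ [0, 1] → ψ i = List.replicate (ψ i).length 0 := fun i hlr hi =>
    List.eq_replicate_of_mem fun x hx => hψ.elim
      (fun h => eq_zero_of_mem_of_subst_infix_rigid h (two_le_count_append_append hlr hi) hx)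
      (fun h => eq_zero_of_mem_of_subst_infix_rigid h
        (two_le_count_append_append hlr (by simpa [or_comm] using hi)) hx)
  have hcomm : ψ 0 ++ ψ 1 = ψ 1 ++ ψ 0 := by
    rw [hpow 0 h0 (by simp), hpow 1 h1 (by simp), ← List.replicate_add, ← List.replicate_add,
      Nat.add_comm]
  have hpair : ∀ a b, subst ψ [a, b] = ψ a ++ ψ b := fun a b => by simp [subst]
  show subst ψ (l ++ [0, 1] ++ r) = subst ψ (l ++ [1, 0] ++ r)
  rw [subst_append, subst_append, hpair, hcomm, subst_append, subst_append, hpair]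

theorem count_zero_idA (n : ℕ) : (idA n).1.count 0 = n ∧ (idA n).2.count 0 = n := by
  simp [idA, List.count_flatten, Function.comp_def, List.count_eq_zero]

theorem filter_ne_zero_idA (n : ℕ) :
    (idA n).1.filter (· ≠ 0) = (idA n).2.filter (· ≠ 0) := by
  simp only [idA, List.filter_append, List.filter_flatten, List.map_map]
  simp [Function.comp_def, ← List.flatMap_def, List.filter_eq_self.mpr]
  exact (List.flatMap_pure_eq_map _ _).symm

theorem satId_idA_rigid {n e₀ : ℕ} {es : List ℕ} (hn : 2 ≤ n) (hlim : e₀ + es.sum ≤ n - 1) :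
    SatId (FM (rigid e₀ es)) (idA n) := by
  refine FM.satId_of_subst fun ψ hψ => ?_
  have hx : ψ 0 = [] := by
    refine List.eq_nil_iff_forall_not_mem.mpr fun x hx => ?_
    have hle : n ≤ (rigid e₀ es).count x := by
      rcases hψ with hψ | hψ
      · exact (count_zero_idA n).1 ▸ count_le_of_subst_infix hψ hx
      · exact (count_zero_idA n).2 ▸ count_le_of_subst_infix hψ hx
    by_cases h0 : x = 0
    · rw [h0, count_zero_rigid] at hle; omega
    · have := count_rigid_le_one e₀ es h0; omega
  rw [← subst_filter_ne_of_eq_nil hx, filter_ne_zero_idA, subst_filter_ne_of_eq_nil hx]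

/-- For every `n ≥ 3`, the factor monoid of any `(n-1)`-limited rigid word
satisfies the identities (0) and (Aₙ). -/
theorem stmt3 (n : ℕ) (hn : 3 ≤ n) (e₀ : ℕ) (es : List ℕ)
    (hlim : e₀ + es.sum ≤ n - 1) :
    (∀ p ∈ ids0, SatId (FM (rigid e₀ es)) p) ∧ SatId (FM (rigid e₀ es)) (idA n) := by
  refine ⟨fun p hp => ?_, satId_idA_rigid (by omega) hlim⟩
  simp only [ids0, Set.mem_insert_iff, Set.mem_singleton_iff] at hp
  rcases hp with rfl | rfl | rfl
  · exact satId_swap_rigid e₀ es (l := []) (r := [2, 0, 3, 1]) (by simp) (by simp)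
  · exact satId_swap_rigid e₀ es (l := [0, 2]) (r := [3, 1]) (by simp) (by simp)
  · exact satId_swap_rigid e₀ es (l := [0, 2, 1, 3]) (r := []) (by simp) (by simp)
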